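/- Let N₁, …, N_k be finitely generated torsion-free non-abelian nilpotent groups each of whose rational Malcev completion has no abelian direct factor, let N = N₁ × ⋯ × N_k, and let σ ∈ S_k. Suppose (φᵢⱼ) is a matrix of homomorphisms φᵢⱼ : Nⱼ → Nᵢ such that each φ_{i,σ(i)} is an isomorphism and im φᵢⱼ ≤ Z(Nᵢ) whenever j ≠ σ(i). Then the map N → N whose i-th component is ∏ⱼ φᵢⱼ ∘ πⱼ is an automorphism of N. -/

import Mathlib

/-- `ι : N →* M` realizes `M` as the rational Malcev completion of `N`: `M` is a
torsion-free nilpotent group into which `N` embeds, every element of `M` has a unique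
`k`-th root for every `k ≥ 1`, and every element of `M` has some positive power lying in
(the image of) `N`. -/
structure IsRationalMalcevCompletion {N M : Type*} [Group N] [Group M] (ι : N →* M) :
    Prop where
  nilpotent : Group.IsNilpotent M
  torsionFree : ∀ g : M, g ≠ 1 → ¬IsOfFinOrder g
  injective : Function.Injective ι
  uniqueRoots : ∀ (m : M) (k : ℕ), 0 < k → ∃! x : M, x ^ k = m
  cofinal : ∀ m : M, ∃ k : ℕ, 0 < k ∧ m ^ k ∈ MonoidHom.range ι

/-- A group has no abelian direct factor if whenever it is isomorphic to `A × B` with `A`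
abelian, `A` is trivial. -/
def NoAbelianDirectFactor (G : Type u) [Group G] : Prop :=
  ∀ (A B : Type u) (_ : Group A) (_ : Group B),
    Nonempty (G ≃* A × B) → (∀ a b : A, a * b = b * a) → Subsingleton A

/-!
Modulo the centre, the map agrees with the "permutation matrix" `g ↦ (φ i (σ i) (g (σ i)))ᵢ`,
an isomorphism, because the off-diagonal entries have central image. It also agrees with it on the
centre: an off-diagonal `φᵢⱼ` has abelian image, so it kills `[Nⱼ, Nⱼ]`, and a nonzero power of
every central `x ∈ Nⱼ` lies in `[Nⱼ, Nⱼ]`. Otherwise, by Hall's isolator property, the central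
elements of the Malcev completion `Mⱼ` having a power in `⟨x⟩` would form a nontrivial divisible
subgroup meeting `[Mⱼ, Mⱼ]` trivially; as divisible abelian groups are injective `ℤ`-modules, it
would split off as an abelian direct factor. A homomorphism agreeing with an isomorphism both
modulo the centre and on the centre is bijective.
-/

universe u

open Subgroup
open scoped commutatorElement

section Commutator

variable {G : Type*} [Group G]

theorem Commute.of_pow_right [IsMulTorsionFree G] {a b : G} {n : ℕ} (hn : n ≠ 0)
    (h : Commute a (b ^ n)) : Commute a b := by
  have hconj : (a * b * a⁻¹) ^ n = b ^ n := by
    rw [conj_pow, h.eq, mul_inv_cancel_right]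
  exact mul_inv_eq_iff_eq_mul.mp (pow_left_injective hn hconj)

theorem commutatorElement_pow_right_of_forall_mem_center {v : G} (hv : ∀ g, ⁅v, g⁆ ∈ center G)
    (g : G) (b : ℕ) : ⁅v, g ^ b⁆ = ⁅v, g⁆ ^ b := by
  induction b with
  | zero => simp
  | succ b ih =>
    rw [pow_succ', commutatorElement_mul_right_eq_mul_conj, mul_assoc _ g,
      mem_center_iff.mp (hv _) g, mul_assoc, mul_inv_cancel_right, ih, ← pow_succ']

theorem commutatorElement_pow_left_of_forall_mem_center {v : G} (hv : ∀ g, ⁅v, g⁆ ∈ center G)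
    (g : G) (a : ℕ) : ⁅v ^ a, g⁆ = ⁅v, g⁆ ^ a := by
  induction a with
  | zero => simp
  | succ a ih =>
    rw [pow_succ', commutatorElement_mul_left_eq_conj_mul, ih,
      mem_center_iff.mp (pow_mem (hv g) a) v, mul_inv_cancel_right, ← pow_succ]

theorem commutatorElement_mul_left_of_mem_center {z : G} (hz : z ∈ center G) (h g : G) :
    ⁅h * z, g⁆ = ⁅h, g⁆ := by
  have hzg : ⁅z, g⁆ = 1 :=
    commutatorElement_eq_one_iff_mul_comm.mpr (mem_center_iff.mp hz g).symm
  rw [mem_center_iff.mp hz h, commutatorElement_mul_left_eq_conj_mul, hzg, mul_one,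
    ← mem_center_iff.mp hz, mul_inv_cancel_right]

end Commutator

section Isolator

variable {G : Type*} [Group G]

def Subgroup.centralIsolator (K : Subgroup G) : Subgroup G where
  carrier := {y | y ∈ center G ∧ ∃ n, 0 < n ∧ y ^ n ∈ K}
  one_mem' := ⟨one_mem _, 1, one_pos, by rw [one_pow]; exact K.one_mem⟩
  mul_mem' := by
    rintro x y ⟨hx, a, ha, hxa⟩ ⟨hy, b, hb, hyb⟩
    refine ⟨mul_mem hx hy, a * b, Nat.mul_pos ha hb, ?_⟩
    rw [(hy.comm x).symm.mul_pow, pow_mul, mul_comm a b, pow_mul]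
    exact K.mul_mem (K.pow_mem hxa b) (K.pow_mem hyb a)
  inv_mem' := by
    rintro x ⟨hx, a, ha, hxa⟩
    exact ⟨inv_mem hx, a, ha, by rw [inv_pow]; exact K.inv_mem hxa⟩

theorem Subgroup.lowerCentralSeries_le_center {c : ℕ}
    (hc : (⊤ : Subgroup G).lowerCentralSeries (c + 1) = ⊥) :
    (⊤ : Subgroup G).lowerCentralSeries c ≤ center G := fun z hz => by
  refine mem_center_iff.mpr fun g => ?_
  have hzg : ⁅z, g⁆ ∈ (⊤ : Subgroup G).lowerCentralSeries (c + 1) :=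
    commutator_mem_commutator hz (mem_top g)
  rw [hc, mem_bot, commutatorElement_eq_one_iff_mul_comm] at hzg
  exact hzg.symm

theorem Subgroup.eq_one_of_mem_lowerCentralSeries {c i : ℕ}
    (hc : (⊤ : Subgroup G).lowerCentralSeries c = ⊥) (hci : c ≤ i) {u : G}
    (hu : u ∈ (⊤ : Subgroup G).lowerCentralSeries i) : u = 1 := by
  rw [← mem_bot, ← hc]
  exact Subgroup.lowerCentralSeries_antitone _ hci hu

theorem exists_pow_inv_mul_mem_of_quotient {Z : Subgroup G} [Z.Normal] {H : Subgroup G}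
    {j : ℕ} {v : G}
    (hv : ∃ n, 0 < n ∧ (v : G ⧸ Z) ^ n ∈ (H.map (QuotientGroup.mk' Z)).lowerCentralSeries j) :
    ∃ n, 0 < n ∧ ∃ h ∈ H.lowerCentralSeries j, h⁻¹ * v ^ n ∈ Z := by
  obtain ⟨n, hn, hvn⟩ := hv
  rw [← map_lowerCentralSeries] at hvn
  obtain ⟨h, hh, hhv⟩ := hvn
  exact ⟨n, hn, h, hh, QuotientGroup.eq.mp (by simpa using hhv)⟩

/-- `hpull` is the isolator property of `G ⧸ Z`, read back in `G`, where `Z` is the last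
nontrivial term of the lower central series. -/
theorem lowerCentralSeries_le_centralIsolator {H : Subgroup G}
    (hH : ∀ g : G, ∃ n, 0 < n ∧ g ^ n ∈ H) {c : ℕ}
    (hc : (⊤ : Subgroup G).lowerCentralSeries (c + 1) = ⊥)
    (hpull : ∀ j, ∀ v ∈ (⊤ : Subgroup G).lowerCentralSeries j,
      ∃ n, 0 < n ∧ ∃ h ∈ H.lowerCentralSeries j,
        h⁻¹ * v ^ n ∈ (⊤ : Subgroup G).lowerCentralSeries c) :
    (⊤ : Subgroup G).lowerCentralSeries c ≤ (H.lowerCentralSeries c).centralIsolator := by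
  have hZ := lowerCentralSeries_le_center hc
  cases c with
  | zero => exact fun z hz => ⟨hZ hz, hH z⟩
  | succ c =>
    rw [Subgroup.lowerCentralSeries_succ, commutator_le]
    intro v hv g _
    have hvZ : ∀ g', ⁅v, g'⁆ ∈ center G := fun g' =>
      hZ (commutator_mem_commutator hv (mem_top g'))
    obtain ⟨a, ha, h, hh, hz⟩ := hpull c v hv
    obtain ⟨b, hb, hgb⟩ := hH g
    refine ⟨hvZ g, a * b, Nat.mul_pos ha hb, ?_⟩
    have hva : v ^ a = h * (h⁻¹ * v ^ a) := (mul_inv_cancel_left h _).symm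
    rw [mul_comm, pow_mul, ← commutatorElement_pow_right_of_forall_mem_center hvZ,
      ← commutatorElement_pow_left_of_forall_mem_center hvZ, hva,
      commutatorElement_mul_left_of_mem_center (hZ hz)]
    exact commutator_mem_commutator hh hgb

theorem exists_pow_mem_lowerCentralSeries_of_eq_bot (c : ℕ) : ∀ {G : Type*} [Group G],
    (⊤ : Subgroup G).lowerCentralSeries c = ⊥ → ∀ {H : Subgroup G},
    (∀ g : G, ∃ n, 0 < n ∧ g ^ n ∈ H) → ∀ i, ∀ u ∈ (⊤ : Subgroup G).lowerCentralSeries i,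
    ∃ n, 0 < n ∧ u ^ n ∈ H.lowerCentralSeries i := by
  induction c with
  | zero =>
    intro G _ hc H _ i u hu
    rw [eq_one_of_mem_lowerCentralSeries hc (Nat.zero_le i) hu]
    exact ⟨1, one_pos, by rw [one_pow]; exact one_mem _⟩
  | succ c ih =>
    intro G _ hc H hH i u hu
    set Z := (⊤ : Subgroup G).lowerCentralSeries c
    let π := QuotientGroup.mk' Z
    have hπ : ∀ j, ((⊤ : Subgroup G).lowerCentralSeries j).map π =
        (⊤ : Subgroup (G ⧸ Z)).lowerCentralSeries j := fun j => by
      rw [map_lowerCentralSeries, map_top_of_surjective π (QuotientGroup.mk'_surjective Z)]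
    have hπc : (⊤ : Subgroup (G ⧸ Z)).lowerCentralSeries c = ⊥ := by
      rw [← hπ, Subgroup.map_eq_bot_iff, QuotientGroup.ker_mk']
    have hπH : ∀ g : G ⧸ Z, ∃ n, 0 < n ∧ g ^ n ∈ H.map π := fun g => by
      obtain ⟨g, rfl⟩ := QuotientGroup.mk'_surjective Z g
      obtain ⟨n, hn, hgn⟩ := hH g
      exact ⟨n, hn, g ^ n, hgn, map_pow π g n⟩
    have hpull : ∀ j, ∀ v ∈ (⊤ : Subgroup G).lowerCentralSeries j,
        ∃ n, 0 < n ∧ ∃ h ∈ H.lowerCentralSeries j, h⁻¹ * v ^ n ∈ Z := fun j v hv =>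
      exists_pow_inv_mul_mem_of_quotient (ih hπc hπH j _ (hπ j ▸ mem_map_of_mem π hv))
    have hZ := lowerCentralSeries_le_centralIsolator hH hc hpull
    rcases lt_or_ge c i with hci | hic
    · rw [eq_one_of_mem_lowerCentralSeries hc hci hu]
      exact ⟨1, one_pos, by rw [one_pow]; exact one_mem _⟩
    · obtain ⟨a, ha, h, hh, hz⟩ := hpull i u hu
      obtain ⟨hzc, t, ht, hzt⟩ := hZ hz
      refine ⟨a * t, Nat.mul_pos ha ht, ?_⟩
      rw [pow_mul, ← mul_inv_cancel_left h (u ^ a), ((hzc.comm h).symm).mul_pow]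
      exact mul_mem (pow_mem hh t) (Subgroup.lowerCentralSeries_antitone _ hic hzt)

/-- P. Hall's isolator property. -/
theorem exists_pow_mem_lowerCentralSeries_of_cofinal [Group.IsNilpotent G] {H : Subgroup G}
    (hH : ∀ g : G, ∃ n, 0 < n ∧ g ^ n ∈ H) (i : ℕ) {u : G}
    (hu : u ∈ (⊤ : Subgroup G).lowerCentralSeries i) :
    ∃ n, 0 < n ∧ u ^ n ∈ H.lowerCentralSeries i :=
  have ⟨c, hc⟩ := Subgroup.nilpotent_iff_lowerCentralSeries.mp ‹_›
  exists_pow_mem_lowerCentralSeries_of_eq_bot c hc hH i u hu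

end Isolator

section CentralIsolator

variable {G : Type*} [Group G] [IsMulTorsionFree G] {K : Subgroup G}

theorem Subgroup.exists_pow_eq_of_mem_centralIsolator
    (hroot : ∀ n : ℕ, n ≠ 0 → Function.Surjective fun x : G => x ^ n) {y : G}
    (hy : y ∈ K.centralIsolator) {n : ℕ} (hn : n ≠ 0) :
    ∃ r ∈ K.centralIsolator, r ^ n = y := by
  obtain ⟨hyc, a, ha, hya⟩ := hy
  obtain ⟨r, rfl⟩ := hroot n hn y
  refine ⟨r, ⟨mem_center_iff.mpr fun g => ((hyc.comm g).symm.of_pow_right hn).eq, n * a,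
    Nat.mul_pos (Nat.pos_of_ne_zero hn) ha, ?_⟩, rfl⟩
  rwa [pow_mul]

theorem Subgroup.centralIsolator_inf_eq_bot {C : Subgroup G} (hK : K ⊓ C = ⊥) :
    K.centralIsolator ⊓ C = ⊥ := by
  refine eq_bot_iff.mpr fun y ⟨⟨_, a, ha, hya⟩, hyC⟩ => ?_
  have hya1 : y ^ a ∈ K ⊓ C := ⟨hya, pow_mem hyC a⟩
  rw [hK, mem_bot, ← one_pow a] at hya1
  exact pow_left_injective ha.ne' hya1

end CentralIsolator

section DirectFactor

variable {M : Type u} [Group M] {A : Subgroup M}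

/-- A central divisible subgroup meeting the commutator subgroup trivially is a retract: it embeds
in the abelianization, where it is an injective `ℤ`-module by Baer's criterion. -/
theorem exists_retraction_of_le_center (hA : A ≤ center M)
    (hdiv : ∀ a ∈ A, ∀ n : ℕ, n ≠ 0 → ∃ r ∈ A, r ^ n = a) (hdisj : A ⊓ commutator M = ⊥) :
    ∃ χ : M →* A, ∀ a : A, χ a = a := by
  let _ : CommGroup A :=
    { A.toGroup with mul_comm := fun a b => Subtype.ext ((hA a.2).comm b) }
  let _ : DivisibleBy (Additive A) ℕ := divisibleByOfSMulRightSurj _ _ fun {n} hn a => by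
    obtain ⟨r, hr, hrn⟩ := hdiv _ a.toMul.2 n hn
    exact ⟨Additive.ofMul ⟨r, hr⟩, Subtype.ext hrn⟩
  let _ := AddGroup.divisibleByIntOfDivisibleByNat (Additive A)
  let f : A →* Abelianization M := Abelianization.of.comp A.subtype
  have hf : Function.Injective f := by
    refine (injective_iff_map_eq_one f).mpr fun a ha => Subtype.ext ?_
    have haA : (a : M) ∈ A ⊓ commutator M := ⟨a.2, by rwa [← Abelianization.ker_of]⟩
    rwa [hdisj, mem_bot] at haA
  obtain ⟨ρ, hρ⟩ := (Module.Baer.of_divisible (Additive A)).extension_property_addMonoidHom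
    (MonoidHom.toAdditive f) hf (AddMonoidHom.id _)
  exact ⟨(MonoidHom.toAdditive.symm ρ).comp Abelianization.of,
    fun a => DFunLike.congr_fun hρ (Additive.ofMul a)⟩

theorem Subgroup.bijective_noncommCoprod_ker_of_retraction (hA : A ≤ center M) (χ : M →* A)
    (hχ : ∀ a : A, χ a = a) :
    Function.Bijective (A.subtype.noncommCoprod χ.ker.subtype fun a _ => (hA a.2).comm _) := by
  refine ⟨(injective_iff_map_eq_one _).mpr fun ⟨a, b⟩ hab => ?_, fun y => ?_⟩
  · have hab' : (a : M) * b = 1 := hab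
    have ha : a = 1 := by simpa [hχ, show χ b = 1 from b.2] using congrArg χ hab'
    subst ha
    simpa using hab'
  · refine ⟨(χ y, ⟨(χ y : M)⁻¹ * y, ?_⟩), mul_inv_cancel_left _ _⟩
    rw [MonoidHom.mem_ker, map_mul, map_inv, hχ, inv_mul_cancel]

theorem NoAbelianDirectFactor.eq_bot_of_le_center (hno : NoAbelianDirectFactor M)
    (hA : A ≤ center M) (hdiv : ∀ a ∈ A, ∀ n : ℕ, n ≠ 0 → ∃ r ∈ A, r ^ n = a)
    (hdisj : A ⊓ commutator M = ⊥) :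
    A = ⊥ := by
  obtain ⟨χ, hχ⟩ := exists_retraction_of_le_center hA hdiv hdisj
  have := hno A χ.ker _ _
    ⟨(MulEquiv.ofBijective _ (bijective_noncommCoprod_ker_of_retraction hA χ hχ)).symm⟩
    fun a b => Subtype.ext ((hA a.2).comm b)
  exact eq_bot_of_subsingleton A

end DirectFactor

namespace IsRationalMalcevCompletion

variable {N : Type*} {M : Type u} [Group N] [Group M] {ι : N →* M}

theorem isMulTorsionFree (h : IsRationalMalcevCompletion ι) : IsMulTorsionFree M :=
  ⟨fun n hn _ b hab => (h.uniqueRoots (b ^ n) n (Nat.pos_of_ne_zero hn)).unique hab rfl⟩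

theorem pow_surjective (h : IsRationalMalcevCompletion ι) {n : ℕ} (hn : n ≠ 0) :
    Function.Surjective fun x : M => x ^ n :=
  fun y => (h.uniqueRoots y n (Nat.pos_of_ne_zero hn)).exists

theorem map_mem_center (h : IsRationalMalcevCompletion ι) {x : N} (hx : x ∈ center N) :
    ι x ∈ center M := by
  have := h.isMulTorsionFree
  refine mem_center_iff.mpr fun m => ?_
  obtain ⟨k, hk, y, hy⟩ := h.cofinal m
  have hxm : Commute (ι x) (m ^ k) := hy ▸ (hx.comm y).map ι
  exact (hxm.of_pow_right hk.ne').eq.symm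

theorem exists_pow_mem_map_commutator (h : IsRationalMalcevCompletion ι) {m : M}
    (hm : m ∈ commutator M) : ∃ n, 0 < n ∧ m ^ n ∈ (commutator N).map ι := by
  have := h.nilpotent
  have hlcs : ι.range.lowerCentralSeries 1 = (commutator N).map ι := by
    rw [Subgroup.lowerCentralSeries_succ, Subgroup.lowerCentralSeries_zero, commutator_def,
      map_commutator, ← MonoidHom.range_eq_map]
  exact hlcs ▸ exists_pow_mem_lowerCentralSeries_of_cofinal h.cofinal 1 hm

theorem exists_zpow_mem_commutator_of_mem_center
    (h : IsRationalMalcevCompletion ι) (hno : NoAbelianDirectFactor M) {x : N}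
    (hx : x ∈ center N) : ∃ n : ℤ, n ≠ 0 ∧ x ^ n ∈ commutator N := by
  by_contra! hcon
  have := h.isMulTorsionFree
  have hK : zpowers (ι x) ⊓ commutator M = ⊥ := by
    refine eq_bot_iff.mpr ?_
    rintro _ ⟨⟨b, rfl⟩, hb⟩
    obtain ⟨n, hn, w, hw, hwx⟩ := h.exists_pow_mem_map_commutator hb
    have hxbn : x ^ (b * n) = w := h.injective (by rw [hwx, map_zpow, zpow_mul, zpow_natCast])
    rcases eq_or_ne b 0 with rfl | hb0
    · simp
    · exact absurd (hxbn ▸ hw) (hcon _ (mul_ne_zero hb0 (Int.natCast_ne_zero.mpr hn.ne')))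
  have hA := hno.eq_bot_of_le_center (A := (zpowers (ι x)).centralIsolator) (fun _ hy => hy.1)
    (fun _ hy _ hn => exists_pow_eq_of_mem_centralIsolator (fun _ => h.pow_surjective) hy hn)
    (centralIsolator_inf_eq_bot hK)
  have hxA : ι x ∈ (zpowers (ι x)).centralIsolator :=
    ⟨h.map_mem_center hx, 1, one_pos, by rw [pow_one]; exact mem_zpowers _⟩
  rw [hA, mem_bot, ← map_one ι] at hxA
  exact hcon 1 one_ne_zero (by rw [h.injective hxA, one_zpow]; exact one_mem _)

theorem map_eq_one_of_mem_center
    (h : IsRationalMalcevCompletion ι) (hno : NoAbelianDirectFactor M) {P : Type*} [Group P]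
    (hP : ∀ g : P, g ≠ 1 → ¬IsOfFinOrder g) {φ : N →* P} (hφ : φ.range ≤ center P) {x : N}
    (hx : x ∈ center N) : φ x = 1 := by
  obtain ⟨n, hn, hxn⟩ := h.exists_zpow_mem_commutator_of_mem_center hno hx
  have hker : commutator N ≤ φ.ker := by
    rw [commutator_def, commutator_le]
    intro g₁ _ g₂ _
    rw [MonoidHom.mem_ker, map_commutatorElement, commutatorElement_eq_one_iff_commute]
    exact ((hφ ⟨g₂, rfl⟩).comm _).symm
  by_contra hne
  exact hP _ hne (isOfFinOrder_iff_zpow_eq_one.mpr ⟨n, hn, by rw [← map_zpow]; exact hker hxn⟩)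

end IsRationalMalcevCompletion

namespace MonoidHom

section NoncommPiCoprod

variable {ι : Type*} [Fintype ι] [DecidableEq ι] {N : ι → Type*} [∀ i, Group (N i)]
  {G : Type*} [Group G] {ϕ : ∀ i, N i →* G}
  {hcomm : Pairwise fun i j => ∀ x y, Commute (ϕ i x) (ϕ j y)}

theorem noncommPiCoprod_eq_of_forall_ne_eq_one (j₀ : ι) {f : ∀ i, N i}
    (hf : ∀ j ≠ j₀, ϕ j (f j) = 1) : noncommPiCoprod ϕ hcomm f = ϕ j₀ (f j₀) := by
  rw [← noncommPiCoprod_mulSingle (hcomm := hcomm) ϕ j₀ (f j₀), noncommPiCoprod_apply,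
    noncommPiCoprod_apply]
  refine Finset.noncommProd_congr rfl (fun j _ => ?_) _
  rcases eq_or_ne j j₀ with rfl | hj
  · rw [Pi.mulSingle_eq_same]
  · rw [Pi.mulSingle_eq_of_ne hj, map_one, hf j hj]

theorem inv_mul_noncommPiCoprod_mem (K : Subgroup G) [K.Normal] (j₀ : ι)
    (hK : ∀ j ≠ j₀, (ϕ j).range ≤ K) (f : ∀ i, N i) :
    (ϕ j₀ (f j₀))⁻¹ * noncommPiCoprod ϕ hcomm f ∈ K := by
  let π := QuotientGroup.mk' K
  have hπ :
      π.comp ((ϕ j₀).comp (Pi.evalMonoidHom N j₀)) = π.comp (noncommPiCoprod ϕ hcomm) := by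
    refine pi_ext fun j x => ?_
    rcases eq_or_ne j j₀ with rfl | hj
    · simp
    · simp [Pi.mulSingle_eq_of_ne' hj, π, (QuotientGroup.eq_one_iff _).mpr (hK j hj ⟨x, rfl⟩)]
  exact QuotientGroup.eq.mp (DFunLike.congr_fun hπ f)

end NoncommPiCoprod

theorem noncommPiCoprod_apply_eq_prod_finRange {k : ℕ} {N : Fin k → Type*}
    [∀ i, Group (N i)] {G : Type*} [Group G] (ϕ : ∀ i, N i →* G)
    (hcomm : Pairwise fun i j => ∀ x y, Commute (ϕ i x) (ϕ j y)) (f : ∀ i, N i) :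
    noncommPiCoprod ϕ hcomm f = ((List.finRange k).map fun j => ϕ j (f j)).prod := by
  simp only [noncommPiCoprod_apply, Finset.noncommProd, Fin.univ_val_map,
    Multiset.noncommProd_coe, List.ofFn_eq_map]

theorem bijective_of_inv_mul_mem_center {G H : Type*} [Group G] [Group H] (f : G →* H)
    (e : G ≃* H) (hmod : ∀ g, (e g)⁻¹ * f g ∈ center H) (hcen : ∀ z ∈ center G, f z = e z) :
    Function.Bijective f := by
  have he : ∀ g, e g ∈ center H → g ∈ center G := fun g hg =>
    mem_center_iff.mpr fun g' => e.injective (by simpa using mem_center_iff.mp hg (e g'))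
  refine ⟨(injective_iff_map_eq_one f).mpr fun g hg => ?_, fun t => ?_⟩
  · have hgc : g ∈ center G := he g (by simpa [hg] using hmod g)
    exact e.injective (by rw [← hcen g hgc, hg, map_one])
  · set u := (e (e.symm t))⁻¹ * f (e.symm t)
    have hw : e.symm u⁻¹ ∈ center G := he _ (by simpa [u] using inv_mem (hmod (e.symm t)))
    refine ⟨e.symm t * e.symm u⁻¹, ?_⟩
    rw [map_mul, hcen _ hw, MulEquiv.apply_symm_apply]
    simp [u]

end MonoidHom

theorem matrix_with_iso_permutation_is_automorphism_general (k : ℕ) (N : Fin k → Type u)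
    [∀ i, Group (N i)]
    (htf : ∀ i, ∀ g : N i, g ≠ 1 → ¬IsOfFinOrder g)
    (M : Fin k → Type u) [∀ i, Group (M i)] (ι : ∀ i, N i →* M i)
    (hι : ∀ i, IsRationalMalcevCompletion (ι i))
    (hno : ∀ i, NoAbelianDirectFactor (M i))
    (σ : Equiv.Perm (Fin k)) (φ : ∀ i j : Fin k, N j →* N i)
    (hiso : ∀ i, Function.Bijective (φ i (σ i)))
    (hcent : ∀ i j, j ≠ σ i → MonoidHom.range (φ i j) ≤ Subgroup.center (N i)) :
    ∃ ψ : (∀ i, N i) ≃* (∀ i, N i),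
      ∀ (g : ∀ i, N i) (i : Fin k),
        ψ g i = ((List.finRange k).map (fun j => φ i j (g j))).prod := by
  have hcomm : ∀ i, Pairwise fun j j' => ∀ x y, Commute (φ i j x) (φ i j' y) := by
    intro i j j' hjj' x y
    rcases eq_or_ne j (σ i) with rfl | hj
    · exact ((hcent i j' hjj'.symm ⟨y, rfl⟩).comm _).symm
    · exact (hcent i j hj ⟨x, rfl⟩).comm _
  let Ψ : (∀ j, N j) →* ∀ i, N i :=
    MonoidHom.pi fun i => MonoidHom.noncommPiCoprod (φ i) (hcomm i)
  let D : (∀ j, N j) ≃* ∀ i, N i :=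
    { (Equiv.piCongrLeft N σ).symm.trans
        (Equiv.piCongrRight fun i => (MulEquiv.ofBijective _ (hiso i)).toEquiv) with
      map_mul' := fun g g' => by funext i; simp }
  have hD : ∀ g i, D g i = φ i (σ i) (g (σ i)) := fun g i => by simp [D]
  have hΨ : Function.Bijective Ψ := by
    refine Ψ.bijective_of_inv_mul_mem_center D (fun g => ?_) (fun z hz => funext fun i => ?_)
    · rw [Subgroup.center_pi, Subgroup.mem_pi]
      intro i _
      rw [Pi.mul_apply, Pi.inv_apply, hD]
      exact MonoidHom.inv_mul_noncommPiCoprod_mem (hcomm := hcomm i) _ (σ i) (hcent i) g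
    · rw [Subgroup.center_pi, Subgroup.mem_pi] at hz
      rw [hD]
      exact MonoidHom.noncommPiCoprod_eq_of_forall_ne_eq_one (hcomm := hcomm i) (σ i) fun j hj =>
        (hι j).map_eq_one_of_mem_center (hno j) (htf i) (hcent i j hj) (hz j trivial)
  exact ⟨MulEquiv.ofBijective Ψ hΨ, fun g i =>
    MonoidHom.noncommPiCoprod_apply_eq_prod_finRange (φ i) (hcomm i) g⟩

/-- Let `N₁, …, N_k` be finitely generated torsion-free non-abelian nilpotent groups whose
rational Malcev completions have no abelian direct factor, `σ ∈ S_k`, and `(φᵢⱼ)` a matrix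
of homomorphisms `φᵢⱼ : Nⱼ → Nᵢ` such that each `φ_{i,σ(i)}` is an isomorphism and
`im φᵢⱼ ≤ Z(Nᵢ)` for `j ≠ σ(i)`. Then the map `N → N` whose `i`-th component is
`∏ⱼ φᵢⱼ(gⱼ)` is an automorphism of `N = N₁ × ⋯ × N_k`. -/
theorem matrix_with_iso_permutation_is_automorphism (k : ℕ) (N : Fin k → Type u)
    [∀ i, Group (N i)]
    (hfg : ∀ i, Group.FG (N i)) (htf : ∀ i, ∀ g : N i, g ≠ 1 → ¬IsOfFinOrder g)
    (hnilp : ∀ i, Group.IsNilpotent (N i))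
    (hnonab : ∀ i, ∃ a b : N i, a * b ≠ b * a)
    (M : Fin k → Type u) [∀ i, Group (M i)] (ι : ∀ i, N i →* M i)
    (hι : ∀ i, IsRationalMalcevCompletion (ι i))
    (hno : ∀ i, NoAbelianDirectFactor (M i))
    (σ : Equiv.Perm (Fin k)) (φ : ∀ i j : Fin k, N j →* N i)
    (hiso : ∀ i, Function.Bijective (φ i (σ i)))
    (hcent : ∀ i j, j ≠ σ i → MonoidHom.range (φ i j) ≤ Subgroup.center (N i)) :
    ∃ ψ : (∀ i, N i) ≃* (∀ i, N i),
      ∀ (g : ∀ i, N i) (i : Fin k),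
        ψ g i = ((List.finRange k).map (fun j => φ i j (g j))).prod :=
  matrix_with_iso_permutation_is_automorphism_general k N htf M ι hι hno σ φ hiso hcent
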